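/- arXiv:2510.09197 — 3 statements merged into one kernel-verified Lean document; each statement's English description precedes it below -/
import Mathlib

section
/- Let G be a connected finite simple graph. Then β(G) is a simple root of the independence polynomial I(G,z), and every complex root ρ of I(G,z) with ρ ≠ β(G) satisfies |ρ| > β(G). -/
/-!
Write `I_A` for the independence polynomial of `G[A]`, so that `I_A = I_{A \ v} - z I_{A \ N[v]}`
for `v ∈ A`. Let `c` be the least positive root of any `I_A`, say of `I_{A₀}`. Each `I_A` is `1`
at `0`, hence nonnegative on `[0, c]`, and there the recursion makes `A ↦ I_A(x)` antitone; so
`0 ≤ I_V(c) ≤ I_{A₀}(c) = 0`, which forces `c = β`. Thus `I_A(β) ≥ 0` for all `A`, and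
connectivity upgrades this to `I_A(β) > 0` for `A ≠ V`. Since `I_V' = -∑ v, I_{V \ N[v]}`, the
root `β` is simple.

For `‖z‖ ≤ β`, `z ≠ β`, the recursion and the triangle inequality show by induction that
`‖I_A(z)‖ / I_A(β)` is strictly increasing in `A`, which is stated cross-multiplied because
`I_V(β) = 0`. Comparing `V` with `∅` gives `I_V(z) ≠ 0`.
-/

open Polynomial

open scoped Classical in
/-- `indPolyOn G A` is the independence polynomial (over `ℝ`) of the subgraph of `G`
induced on the vertex set `A`: the sum of `(-1)^|s| • X^|s|` over all independent
sets `s ⊆ A` of `G`.  Equivalently it is `∑ k (-1)^k a_k z^k` where `a_k` is the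
number of independent sets of size `k` of the induced subgraph `G[A]`. -/
noncomputable def indPolyOn {V : Type*} [Fintype V] (G : SimpleGraph V) (A : Set V) :
    Polynomial ℝ :=
  ∑ s ∈ Finset.univ.filter
      (fun s : Finset V => ↑s ⊆ A ∧ ∀ u ∈ s, ∀ v ∈ s, ¬ G.Adj u v),
    ((-1 : ℝ) ^ s.card) • (X : Polynomial ℝ) ^ s.card

/-- The independence polynomial `I(G,z)` of `G`. -/
noncomputable def indPoly {V : Type*} [Fintype V] (G : SimpleGraph V) : Polynomial ℝ :=
  indPolyOn G Set.univ

namespace SimpleGraph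

variable {V : Type*} (G : SimpleGraph V)

def closedNeighborSet (v : V) : Set V := insert v (G.neighborSet v)

@[simp]
theorem mem_closedNeighborSet {u v : V} : u ∈ G.closedNeighborSet v ↔ u = v ∨ G.Adj v u :=
  Iff.rfl

end SimpleGraph

open Finset

section Combinatorics

variable {V : Type*} [Fintype V] (G : SimpleGraph V)

open scoped Classical in
noncomputable def indepSetsOn (A : Set V) : Finset (Finset V) :=
  univ.filter fun s : Finset V => ↑s ⊆ A ∧ ∀ u ∈ s, ∀ v ∈ s, ¬ G.Adj u v

theorem mem_indepSetsOn {A : Set V} {s : Finset V} :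
    s ∈ indepSetsOn G A ↔ ↑s ⊆ A ∧ ∀ u ∈ s, ∀ v ∈ s, ¬ G.Adj u v := by
  simp [indepSetsOn]

theorem indPolyOn_eq_sum (A : Set V) :
    indPolyOn G A = ∑ s ∈ indepSetsOn G A, (-1 : ℝ) ^ #s • (X : ℝ[X]) ^ #s :=
  rfl

theorem eval_indPolyOn (A : Set V) (x : ℝ) :
    (indPolyOn G A).eval x = ∑ s ∈ indepSetsOn G A, (-x) ^ #s := by
  simp [indPolyOn_eq_sum, eval_finsetSum, neg_pow x]

theorem one_le_eval_indPolyOn (A : Set V) {x : ℝ} (hx : x ≤ 0) : 1 ≤ (indPolyOn G A).eval x := by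
  rw [eval_indPolyOn]
  have hempty : ∅ ∈ indepSetsOn G A := by simp [mem_indepSetsOn]
  simpa using single_le_sum (fun s _ => pow_nonneg (neg_nonneg.2 hx) #s) hempty

theorem indPolyOn_ne_zero (A : Set V) : indPolyOn G A ≠ 0 := fun h => by
  have := one_le_eval_indPolyOn G A le_rfl
  norm_num [h] at this

theorem indPolyOn_empty : indPolyOn G ∅ = 1 := by
  have : indepSetsOn G ∅ = {∅} := by
    ext s
    simp +contextual [mem_indepSetsOn]
  simp [indPolyOn_eq_sum, this]

variable {G} in
theorem notMem_of_mem_indepSetsOn_sdiff {A : Set V} {t : Finset V} {v : V}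
    (ht : t ∈ indepSetsOn G (A \ G.closedNeighborSet v)) : v ∉ t := fun hv => by
  simpa using ((mem_indepSetsOn G).1 ht).1 hv

section DecidableEq

variable [DecidableEq V]

variable {G} in
theorem erase_mem_indepSetsOn_sdiff {A : Set V} {s : Finset V} {v : V} (hs : s ∈ indepSetsOn G A)
    (hv : v ∈ s) : s.erase v ∈ indepSetsOn G (A \ G.closedNeighborSet v) := by
  rw [mem_indepSetsOn] at hs ⊢
  refine ⟨fun u hu => ?_, fun a ha b hb => hs.2 a (mem_of_mem_erase ha) b (mem_of_mem_erase hb)⟩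
  obtain ⟨huv, hu⟩ := mem_erase.1 hu
  exact ⟨hs.1 hu, by simpa [huv] using hs.2 v hv u hu⟩

variable {G} in
theorem insert_mem_indepSetsOn {A : Set V} {t : Finset V} {v : V} (hv : v ∈ A)
    (ht : t ∈ indepSetsOn G (A \ G.closedNeighborSet v)) : insert v t ∈ indepSetsOn G A := by
  rw [mem_indepSetsOn] at ht ⊢
  have hnadj : ∀ u ∈ t, u ≠ v ∧ ¬ G.Adj v u := fun u hu => by simpa using (ht.1 hu).2
  refine ⟨?_, ?_⟩
  · simpa [Set.insert_subset_iff, hv] using ht.1.trans Set.sdiff_subset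
  · simp only [mem_insert, forall_eq_or_imp, G.loopless.irrefl v, not_false_eq_true, true_and]
    exact ⟨fun u hu => (hnadj u hu).2, fun u hu => ⟨fun h => (hnadj u hu).2 h.symm, ht.2 u hu⟩⟩

theorem sum_indepSetsOn_filter_mem {A : Set V} {v : V} (hv : v ∈ A) :
    ∑ s ∈ indepSetsOn G A with v ∈ s, (-1 : ℝ) ^ #s • (X : ℝ[X]) ^ #s =
      -(X * indPolyOn G (A \ G.closedNeighborSet v)) := by
  rw [indPolyOn_eq_sum, mul_sum, ← sum_neg_distrib]
  refine sum_nbij' (fun s => s.erase v) (insert v) ?_ ?_ ?_ ?_ ?_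
  · intro s hs
    rw [mem_filter] at hs
    exact erase_mem_indepSetsOn_sdiff hs.1 hs.2
  · intro t ht
    exact mem_filter.2 ⟨insert_mem_indepSetsOn hv ht, mem_insert_self v t⟩
  · intro s hs
    exact insert_erase (mem_filter.1 hs).2
  · intro t ht
    exact erase_insert (notMem_of_mem_indepSetsOn_sdiff ht)
  · intro s hs
    obtain ⟨n, hn⟩ : ∃ n, #s = n + 1 := ⟨_, (card_erase_add_one (mem_filter.1 hs).2).symm⟩
    rw [card_erase_of_mem (mem_filter.1 hs).2, hn, Nat.add_sub_cancel, pow_succ, pow_succ,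
      smul_eq_C_mul, smul_eq_C_mul]
    simp only [map_mul, map_neg, map_one]
    ring

end DecidableEq

theorem indPolyOn_eq_sub_X_mul {A : Set V} {v : V} (hv : v ∈ A) :
    indPolyOn G A = indPolyOn G (A \ {v}) - X * indPolyOn G (A \ G.closedNeighborSet v) := by
  classical
  have hsdiff : indepSetsOn G (A \ {v}) = (indepSetsOn G A).filter (v ∉ ·) := by
    ext s
    simp [mem_indepSetsOn, Set.subset_sdiff, and_right_comm]
  rw [sub_eq_add_neg, ← sum_indepSetsOn_filter_mem G hv, indPolyOn_eq_sum, indPolyOn_eq_sum,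
    hsdiff, add_comm, sum_filter_add_sum_filter_not]

theorem derivative_indPoly :
    derivative (indPoly G) = -∑ v, indPolyOn G (G.closedNeighborSet v)ᶜ := by
  classical
  -- `X * (X ^ k)' = k • X ^ k`: one term for each vertex of an independent set of size `k`
  refine mul_left_cancel₀ (X_ne_zero (R := ℝ)) ?_
  have hterm (s : Finset V) :
      X * derivative ((-1 : ℝ) ^ #s • (X : ℝ[X]) ^ #s) = ∑ _v ∈ s, (-1 : ℝ) ^ #s • X ^ #s := by
    rcases s.eq_empty_or_nonempty with rfl | hs
    · simp
    · obtain ⟨n, hn⟩ : ∃ n, #s = n + 1 := ⟨_, (Nat.succ_pred_eq_of_pos hs.card_pos).symm⟩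
      rw [sum_const, hn, derivative_smul, derivative_X_pow, Nat.add_sub_cancel, smul_eq_C_mul,
        smul_eq_C_mul, nsmul_eq_mul, pow_succ, pow_succ, ← C_eq_natCast]
      ring
  calc X * derivative (indPoly G)
      = ∑ s ∈ indepSetsOn G Set.univ, ∑ _v ∈ s, (-1 : ℝ) ^ #s • (X : ℝ[X]) ^ #s := by
        rw [indPoly, indPolyOn_eq_sum, derivative_sum, mul_sum]
        exact sum_congr rfl fun s _ => hterm s
    _ = ∑ v, ∑ s ∈ indepSetsOn G Set.univ with v ∈ s, (-1 : ℝ) ^ #s • (X : ℝ[X]) ^ #s :=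
        sum_comm' (by simp)
    _ = X * -∑ v, indPolyOn G (G.closedNeighborSet v)ᶜ := by
        simp only [sum_indepSetsOn_filter_mem G (Set.mem_univ _), ← Set.compl_eq_univ_sdiff,
          mul_neg, mul_sum, sum_neg_distrib]

end Combinatorics

theorem ContinuousOn.nonneg_of_pos_of_forall_Ioo_ne_zero {f : ℝ → ℝ} {a b : ℝ} (hab : a ≤ b)
    (hf : ContinuousOn f (Set.Icc a b)) (ha : 0 < f a) (hne : ∀ y ∈ Set.Ioo a b, f y ≠ 0) :
    0 ≤ f b := by
  by_contra! hb
  obtain ⟨y, ⟨hay, hyb⟩, hy⟩ := intermediate_value_Icc' hab hf ⟨hb.le, ha.le⟩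
  refine hne y ⟨hay.lt_of_ne ?_, hyb.lt_of_ne ?_⟩ hy
  · rintro rfl
    exact ha.ne' hy
  · rintro rfl
    exact hb.ne hy

section RealRoots

variable {V : Type*} [Fintype V] {G : SimpleGraph V} {β : ℝ}

variable (G) in
theorem eval_indPolyOn_eq_sub_mul (A : Set V) {v : V} (hv : v ∈ A) (x : ℝ) :
    (indPolyOn G A).eval x =
      (indPolyOn G (A \ {v})).eval x - x * (indPolyOn G (A \ G.closedNeighborSet v)).eval x := by
  simp [indPolyOn_eq_sub_X_mul G hv]

theorem eval_indPolyOn_antitone {x : ℝ} (hx : 0 ≤ x) (hnonneg : ∀ A, 0 ≤ (indPolyOn G A).eval x) :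
    Antitone fun A => (indPolyOn G A).eval x := by
  intro B A hBA
  induction A using WellFoundedLT.induction with
  | _ A ih =>
    obtain rfl | hssub := hBA.eq_or_ssubset
    · exact le_rfl
    · obtain ⟨v, hvA, hvB⟩ := Set.exists_of_ssubset hssub
      calc (indPolyOn G A).eval x
            ≤ (indPolyOn G (A \ {v})).eval x := by
              rw [eval_indPolyOn_eq_sub_mul G A hvA]
              linarith [mul_nonneg hx (hnonneg (A \ G.closedNeighborSet v))]
          _ ≤ (indPolyOn G B).eval x :=
              ih _ (Set.sdiff_singleton_ssubset.2 hvA) (Set.subset_sdiff_singleton hBA hvB)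

theorem pos_of_eval_indPoly_eq_zero (hroot : (indPoly G).eval β = 0) : 0 < β := by
  by_contra! hβ
  have : 1 ≤ (indPoly G).eval β := one_le_eval_indPolyOn G Set.univ hβ
  linarith

theorem eval_indPolyOn_nonneg (hroot : (indPoly G).eval β = 0)
    (hmin : ∀ x : ℝ, (indPoly G).eval x = 0 → β ≤ x) (A : Set V) :
    0 ≤ (indPolyOn G A).eval β := by
  set T := {x : ℝ | 0 < x ∧ ∃ A : Set V, (indPolyOn G A).IsRoot x}
  have hT : T.Finite :=
    (Set.finite_iUnion fun A => finite_setOfPred_isRoot (indPolyOn_ne_zero G A)).subset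
      fun x ⟨_, A, hA⟩ => Set.mem_iUnion.2 ⟨A, hA⟩
  have hβT : β ∈ T := ⟨pos_of_eval_indPoly_eq_zero hroot, Set.univ, hroot⟩
  obtain ⟨c, ⟨hc, A₀, hA₀⟩, hcmin⟩ := Set.exists_min_image T id hT ⟨β, hβT⟩
  have hnonneg (A : Set V) {x : ℝ} (hx : x ∈ Set.Icc 0 c) : 0 ≤ (indPolyOn G A).eval x :=
    (indPolyOn G A).continuousOn.nonneg_of_pos_of_forall_Ioo_ne_zero hx.1
      (zero_lt_one.trans_le (one_le_eval_indPolyOn G A le_rfl)) fun y hy hy0 =>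
        (hcmin y ⟨hy.1, A, hy0⟩).not_gt (hy.2.trans_le hx.2)
  have hcroot : (indPoly G).eval c = 0 :=
    le_antisymm ((eval_indPolyOn_antitone hc.le (fun A => hnonneg A ⟨hc.le, le_rfl⟩)
      (Set.subset_univ A₀)).trans_eq hA₀) (hnonneg Set.univ ⟨hc.le, le_rfl⟩)
  obtain rfl : c = β := le_antisymm (hcmin β hβT) (hmin c hcroot)
  exact hnonneg A ⟨hc.le, le_rfl⟩

theorem eval_indPolyOn_pos (hG : G.Connected) (hβ : 0 < β)
    (hnonneg : ∀ A, 0 ≤ (indPolyOn G A).eval β) {A : Set V} (hA : A ≠ Set.univ) :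
    0 < (indPolyOn G A).eval β := by
  induction A using WellFoundedLT.induction with
  | _ A ih =>
    obtain rfl | ⟨a, ha⟩ := A.eq_empty_or_nonempty
    · simp [indPolyOn_empty]
    obtain ⟨v, hv⟩ := (Set.ne_univ_iff_exists_notMem A).1 hA
    obtain ⟨d, -, hdA, hdv⟩ := (hG.preconnected a v).some.exists_boundary_dart A ha hv
    set u := d.snd
    have hrec := eval_indPolyOn_eq_sub_mul G (insert u A) (Set.mem_insert u A) β
    rw [Set.insert_sdiff_self_of_notMem hdv,
      Set.insert_sdiff_of_mem A (G.mem_closedNeighborSet.2 (Or.inl rfl))] at hrec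
    have hssub : A \ G.closedNeighborSet u ⊂ A :=
      Set.sdiff_ssubset_left_iff.2 ⟨d.fst, hdA, Or.inr d.adj.symm⟩
    have hpos := ih _ hssub (hssub.subset.trans_ssubset (Set.ssubset_univ_iff.2 hA)).ne
    -- if `I_A(β) = 0`, then `I_{A ∪ {u}}(β) = -β I_{A \ N[u]}(β) < 0`
    by_contra! hle
    linarith [hnonneg (insert u A), hnonneg A, mul_pos hβ hpos]

end RealRoots

section SimpleRoot

variable {V : Type*} [Fintype V] {G : SimpleGraph V} {β : ℝ}

theorem rootMultiplicity_indPoly_eq_one [Nonempty V] (hroot : (indPoly G).eval β = 0)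
    (hpos : ∀ A : Set V, A ≠ Set.univ → 0 < (indPolyOn G A).eval β) :
    (indPoly G).rootMultiplicity β = 1 := by
  have hderiv : (derivative (indPoly G)).eval β < 0 := by
    rw [derivative_indPoly, eval_neg, eval_finsetSum, neg_neg_iff_pos]
    exact sum_pos (fun v _ => hpos _ (Set.compl_ne_univ.2 ⟨v, by simp⟩)) univ_nonempty
  have hne : indPoly G ≠ 0 := indPolyOn_ne_zero G Set.univ
  have hmult_pos := (rootMultiplicity_pos hne).2 hroot
  have hmult_le : ¬ 1 < (indPoly G).rootMultiplicity β := fun h =>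
    hderiv.ne ((one_lt_rootMultiplicity_iff_isRoot hne).1 h).2
  omega

end SimpleRoot

theorem Complex.one_sub_lt_norm_one_sub {z : ℂ} {r : ℝ} (hz : ‖z‖ ≤ r) (hzr : z ≠ r) :
    1 - r < ‖1 - z‖ := by
  by_contra! h
  have hre_le : 1 - z.re ≤ ‖1 - z‖ := by simpa using Complex.re_le_norm (1 - z)
  have hre : z.re = ‖z‖ := le_antisymm (Complex.re_le_norm z) (by linarith)
  have him : z.im = 0 := Complex.abs_re_eq_norm.1 (by rw [hre, abs_norm])
  exact hzr (Complex.ext (by simp; linarith) (by simp [him]))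

section ComplexRoots

variable {V : Type*} [Fintype V] {G : SimpleGraph V} {β : ℝ} {z : ℂ}

theorem eval_mul_norm_aeval_sdiff_singleton_lt (hβ : 0 < β) (hz : ‖z‖ ≤ β) (hzβ : z ≠ β)
    {A : Set V} {v : V} (hv : v ∈ A) (hpos : 0 < (indPolyOn G (A \ {v})).eval β)
    (hne : aeval z (indPolyOn G (A \ {v})) ≠ 0)
    (hR : A \ G.closedNeighborSet v ⊂ A \ {v} →
      (indPolyOn G (A \ {v})).eval β * ‖aeval z (indPolyOn G (A \ G.closedNeighborSet v))‖ <
        (indPolyOn G (A \ G.closedNeighborSet v)).eval β * ‖aeval z (indPolyOn G (A \ {v}))‖) :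
    (indPolyOn G A).eval β * ‖aeval z (indPolyOn G (A \ {v}))‖ <
      (indPolyOn G (A \ {v})).eval β * ‖aeval z (indPolyOn G A)‖ := by
  have hreal := eval_indPolyOn_eq_sub_mul G A hv β
  have hcomplex : aeval z (indPolyOn G A) = aeval z (indPolyOn G (A \ {v})) -
      z * aeval z (indPolyOn G (A \ G.closedNeighborSet v)) := by
    simp [indPolyOn_eq_sub_X_mul G hv]
  have hsub : A \ G.closedNeighborSet v ⊆ A \ {v} :=
    Set.sdiff_subset_sdiff_right (by simp)
  have hnorm_pos := norm_pos_iff.2 hne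
  obtain heq | hssub := hsub.eq_or_ssubset
  · -- `v` has no neighbour in `A`, so `I_A = (1 - X) I_{A \ {v}}`
    rw [heq, ← one_sub_mul] at hcomplex
    rw [heq] at hreal
    rw [hreal, hcomplex, norm_mul]
    nlinarith [mul_pos (sub_pos.2 (Complex.one_sub_lt_norm_one_sub hz hzβ))
      (mul_pos hpos hnorm_pos)]
  · have htri : ‖aeval z (indPolyOn G (A \ {v}))‖ -
        ‖z‖ * ‖aeval z (indPolyOn G (A \ G.closedNeighborSet v))‖ ≤ ‖aeval z (indPolyOn G A)‖ := by
      rw [hcomplex, ← norm_mul]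
      exact norm_sub_norm_le _ _
    have := hR hssub
    rw [hreal]
    nlinarith [mul_le_mul_of_nonneg_right hz
      (norm_nonneg (aeval z (indPolyOn G (A \ G.closedNeighborSet v))))]

theorem aeval_indPolyOn_ne_zero_of_forall_ssubset {A : Set V} (hA : 0 ≤ (indPolyOn G A).eval β)
    (h : ∀ B ⊂ A, (indPolyOn G A).eval β * ‖aeval z (indPolyOn G B)‖ <
      (indPolyOn G B).eval β * ‖aeval z (indPolyOn G A)‖) :
    aeval z (indPolyOn G A) ≠ 0 := by
  obtain rfl | hA_ne := A.eq_empty_or_nonempty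
  · simp [indPolyOn_empty]
  intro hzero
  have := h ∅ (Set.empty_ssubset.2 hA_ne)
  simp only [indPolyOn_empty, map_one, eval_one, norm_one, hzero, norm_zero, mul_zero,
    mul_one] at this
  linarith

theorem eval_mul_norm_aeval_lt_of_ssubset (hβ : 0 < β)
    (hnonneg : ∀ A, 0 ≤ (indPolyOn G A).eval β)
    (hpos : ∀ A : Set V, A ≠ Set.univ → 0 < (indPolyOn G A).eval β)
    (hz : ‖z‖ ≤ β) (hzβ : z ≠ β) {A B : Set V} (hBA : B ⊂ A) :
    (indPolyOn G A).eval β * ‖aeval z (indPolyOn G B)‖ <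
      (indPolyOn G B).eval β * ‖aeval z (indPolyOn G A)‖ := by
  induction A using WellFoundedLT.induction generalizing B with
  | _ A ih =>
    obtain ⟨v, hvA, hvB⟩ := Set.exists_of_ssubset hBA
    have hA'A : A \ {v} ⊂ A := Set.sdiff_singleton_ssubset.2 hvA
    have hpos_of_sub {C : Set V} (hC : C ⊆ A \ {v}) : 0 < (indPolyOn G C).eval β :=
      hpos C fun h => (hC (h ▸ Set.mem_univ v)).2 rfl
    have hstep := eval_mul_norm_aeval_sdiff_singleton_lt hβ hz hzβ hvA (hpos_of_sub subset_rfl)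
      (aeval_indPolyOn_ne_zero_of_forall_ssubset (hnonneg _) fun _ => ih _ hA'A) (ih _ hA'A)
    obtain hBeq | hBssub := (Set.subset_sdiff_singleton hBA.subset hvB).eq_or_ssubset
    · rwa [hBeq]
    · have hB := ih _ hA'A hBssub
      nlinarith [hnonneg A, hpos_of_sub hBssub.subset, hpos_of_sub subset_rfl]

theorem aeval_indPolyOn_ne_zero (hβ : 0 < β) (hnonneg : ∀ A, 0 ≤ (indPolyOn G A).eval β)
    (hpos : ∀ A : Set V, A ≠ Set.univ → 0 < (indPolyOn G A).eval β)
    (hz : ‖z‖ ≤ β) (hzβ : z ≠ β) (A : Set V) : aeval z (indPolyOn G A) ≠ 0 :=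
  aeval_indPolyOn_ne_zero_of_forall_ssubset (hnonneg A)
    fun _ => eval_mul_norm_aeval_lt_of_ssubset hβ hnonneg hpos hz hzβ

end ComplexRoots

/-- For a connected finite simple graph `G`, the smallest real root
`β(G)` of the independence polynomial is a simple root, and every complex root
`ρ ≠ β(G)` satisfies `|ρ| > β(G)`. -/
theorem beta_simple_root_and_strictly_smallest {V : Type*} [Fintype V]
    (G : SimpleGraph V) (hG : G.Connected)
    (β : ℝ) (hroot : (indPoly G).eval β = 0)
    (hmin : ∀ x : ℝ, (indPoly G).eval x = 0 → β ≤ x) :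
    (indPoly G).rootMultiplicity β = 1 ∧
      ∀ ρ : ℂ, aeval ρ (indPoly G) = 0 → ρ ≠ (β : ℂ) → β < ‖ρ‖ := by
  have hβ := pos_of_eval_indPoly_eq_zero hroot
  have hnonneg := eval_indPolyOn_nonneg hroot hmin
  have hpos (A : Set V) (hA : A ≠ Set.univ) := eval_indPolyOn_pos hG hβ hnonneg hA
  have : Nonempty V := hG.nonempty
  refine ⟨rootMultiplicity_indPoly_eq_one hroot hpos, fun ρ hρ hρβ => ?_⟩
  by_contra! hle
  exact aeval_indPolyOn_ne_zero hβ hnonneg hpos hle hρβ Set.univ hρ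
end

section
/- Let G be a connected finite simple graph on n vertices, β := β(G), and r_G := β^{dia(G)}/(2n). Then for every complex z with |z − β| < r_G, the derivative of the independence polynomial satisfies |I'(G, z)| ≤ 2·|I'(G, β)|. -/
open Polynomial

/-!
Write `I_A` for the independence polynomial of the subgraph induced on `A` and `N[v]` for the
closed neighbourhood of `v`. Splitting independent sets by whether they contain `v` gives
`I_{A ∪ {v}} = I_A - X I_{A \ N[v]}` and `I_A' = -∑_{v ∈ A} I_{A \ N[v]}`.

Below the smallest root `β` of `I_V` every `I_A` is positive, so at `β` all `I_A` are
nonnegative and, by the recurrence, antitone in `A`. If `y` has a neighbour outside `A`, then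
`β I_{A \ {y}}(β) ≤ I_A(β)`; following a shortest path from `N[u]` to `v` one vertex at a time
gives `β^{dia} I_{A \ N[v]}(β) ≤ I_A(β)` whenever `A` misses `N[u]`. Iterating the derivative
formula, the `k`-th derivative of such an `I_A` at `β` is at most `I_A(β) (n / β^{dia})^k`, so
on the disc of radius `r_G` the Taylor expansion of `I_A` at `β` is dominated by
`I_A(β) ∑ 2^{-k} ≤ 2 I_A(β)`. Apply this to `A = V \ N[v]` and sum over `v`, using
`|I'(β)| = ∑_v I_{V \ N[v]}(β)`.
-/

theorem Polynomial.norm_aeval_le_of_abs_iterate_derivative_le {Q : ℝ[X]} {x M c : ℝ}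
    (hc : 0 ≤ c) (hQ : ∀ i, |(derivative^[i] Q).eval x| ≤ M * c ^ i) {z : ℂ}
    (hz : c * ‖z - x‖ ≤ 1 / 2) :
    ‖aeval z Q‖ ≤ 2 * M := by
  have hM : 0 ≤ M := by simpa using (abs_nonneg _).trans (hQ 0)
  have hcoeff (i : ℕ) : |(taylor x Q).coeff i| ≤ M * c ^ i := by
    refine le_trans ?_ (hQ i)
    rw [taylor_coeff, ← congrFun (factorial_smul_hasseDeriv (R := ℝ) i) Q, LinearMap.smul_apply,
      eval_smul, nsmul_eq_mul, abs_mul, Nat.abs_cast]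
    exact le_mul_of_one_le_left (abs_nonneg _) (by exact_mod_cast i.factorial_pos)
  have htaylor : aeval z Q = aeval (z - x) (taylor x Q) := by
    simp [taylor_apply, aeval_comp]
  calc ‖aeval z Q‖
      ≤ ∑ i ∈ Finset.range ((taylor x Q).natDegree + 1),
          |(taylor x Q).coeff i| * ‖z - x‖ ^ i := by
        rw [htaylor, aeval_eq_sum_range]
        refine (norm_sum_le _ _).trans_eq (Finset.sum_congr rfl fun i _ => ?_)
        rw [norm_smul, norm_pow, Real.norm_eq_abs]
    _ ≤ ∑ i ∈ Finset.range ((taylor x Q).natDegree + 1), M * (1 / 2) ^ i := by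
        refine Finset.sum_le_sum fun i _ => ?_
        calc |(taylor x Q).coeff i| * ‖z - x‖ ^ i ≤ M * c ^ i * ‖z - x‖ ^ i := by
              gcongr; exact hcoeff i
          _ = M * (c * ‖z - x‖) ^ i := by ring
          _ ≤ M * (1 / 2) ^ i := by gcongr
    _ ≤ 2 * M := by
        rw [← Finset.mul_sum, mul_comm]
        exact mul_le_mul_of_nonneg_right (sum_geometric_two_le _) hM

namespace SimpleGraph

open Finset
open scoped Classical

variable {V : Type*} [Fintype V] (G : SimpleGraph V)

noncomputable def closedNbhd (v : V) : Finset V := insert v (G.neighborFinset v)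

noncomputable def indepSubsets (A : Finset V) : Finset (Finset V) :=
  A.powerset.filter fun s => ∀ u ∈ s, ∀ w ∈ s, ¬G.Adj u w

variable {G}

theorem mem_closedNbhd {u v : V} : u ∈ G.closedNbhd v ↔ u = v ∨ G.Adj v u := by
  simp [closedNbhd]

theorem mem_indepSubsets {A s : Finset V} :
    s ∈ G.indepSubsets A ↔ s ⊆ A ∧ ∀ u ∈ s, ∀ w ∈ s, ¬G.Adj u w := by
  simp [indepSubsets]

theorem notMem_of_mem_indepSubsets_sdiff {A s : Finset V} {v : V}
    (hs : s ∈ G.indepSubsets (A \ G.closedNbhd v)) : v ∉ s := fun hv =>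
  (mem_sdiff.1 ((mem_indepSubsets.1 hs).1 hv)).2 (mem_closedNbhd.2 (Or.inl rfl))

theorem insert_mem_indepSubsets_iff {A s : Finset V} {v : V} (hvs : v ∉ s) :
    insert v s ∈ G.indepSubsets A ↔ v ∈ A ∧ s ∈ G.indepSubsets (A \ G.closedNbhd v) := by
  simp only [mem_indepSubsets, insert_subset_iff, subset_sdiff, mem_insert, forall_eq_or_imp,
    disjoint_right, mem_closedNbhd]
  constructor
  · rintro ⟨⟨hvA, hsA⟩, ⟨-, hv⟩, hs⟩
    exact ⟨hvA, ⟨hsA, hvs, fun a ha has => hv a has ha⟩, fun u hu w hw => (hs u hu).2 w hw⟩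
  · rintro ⟨hvA, ⟨hsA, -, hsv⟩, hs⟩
    exact ⟨⟨hvA, hsA⟩, ⟨G.irrefl, fun a ha hadj => hsv a hadj ha⟩,
      fun a ha => ⟨fun hadj => hsv a hadj.symm ha, hs a ha⟩⟩

variable (G)

theorem sum_indepSubsets_filter_mem {M : Type*} [AddCommMonoid M] {A : Finset V} {v : V}
    (hv : v ∈ A) (f : Finset V → M) :
    ∑ s ∈ (G.indepSubsets A).filter (v ∈ ·), f s =
      ∑ s ∈ G.indepSubsets (A \ G.closedNbhd v), f (insert v s) := by
  refine sum_nbij' (·.erase v) (insert v) (fun s hs => ?_) (fun s hs => ?_) (fun s hs => ?_)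
    (fun s hs => erase_insert (notMem_of_mem_indepSubsets_sdiff hs)) (fun s hs => ?_)
  · rw [mem_filter] at hs
    rw [← insert_erase hs.2, insert_mem_indepSubsets_iff (notMem_erase v s)] at hs
    exact hs.1.2
  · have hvs := notMem_of_mem_indepSubsets_sdiff hs
    exact mem_filter.2 ⟨(insert_mem_indepSubsets_iff hvs).2 ⟨hv, hs⟩, mem_insert_self v s⟩
  · exact insert_erase (mem_filter.1 hs).2
  · rw [insert_erase (mem_filter.1 hs).2]

theorem indPolyOn_eq_sum (A : Finset V) :
    indPolyOn G A = ∑ s ∈ G.indepSubsets A, (-X) ^ s.card := by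
  unfold indPolyOn indepSubsets
  refine sum_congr (by ext; simp) fun s _ => ?_
  rw [smul_eq_C_mul, neg_pow (X : ℝ[X]), C_pow, C_neg, C_1]

theorem indPolyOn_empty : indPolyOn G ↑(∅ : Finset V) = 1 := by
  rw [indPolyOn_eq_sum]
  simp [indepSubsets, filter_singleton]

theorem indPolyOn_insert {A : Finset V} {v : V} (hv : v ∉ A) :
    indPolyOn G ↑(insert v A) = indPolyOn G A - X * indPolyOn G ↑(A \ G.closedNbhd v) := by
  have hN : insert v A \ G.closedNbhd v = A \ G.closedNbhd v :=
    insert_sdiff_of_mem _ (mem_closedNbhd.2 (Or.inl rfl))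
  have hnot : (G.indepSubsets (insert v A)).filter (v ∉ ·) = G.indepSubsets A := by
    ext s
    simp only [mem_filter, mem_indepSubsets, subset_insert_iff]
    constructor
    · rintro ⟨⟨hs, hind⟩, hvs⟩
      exact ⟨by rwa [erase_eq_of_notMem hvs] at hs, hind⟩
    · rintro ⟨hs, hind⟩
      exact ⟨⟨(erase_subset v s).trans hs, hind⟩, fun h => hv (hs h)⟩
  rw [indPolyOn_eq_sum, ← sum_filter_add_sum_filter_not _ (v ∈ ·), hnot,
    G.sum_indepSubsets_filter_mem (mem_insert_self v A), hN, indPolyOn_eq_sum, indPolyOn_eq_sum,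
    mul_sum, sub_eq_neg_add, ← sum_neg_distrib]
  refine congrArg (· + _) (sum_congr rfl fun s hs => ?_)
  rw [card_insert_of_notMem (notMem_of_mem_indepSubsets_sdiff hs), pow_succ]
  ring

theorem derivative_indPolyOn (A : Finset V) :
    derivative (indPolyOn G A) = -∑ v ∈ A, indPolyOn G ↑(A \ G.closedNbhd v) := by
  have hterm (s : Finset V) : derivative ((-X : ℝ[X]) ^ s.card) =
      -∑ _v ∈ s, (-X) ^ (s.card - 1) := by
    rw [derivative_pow, sum_const, nsmul_eq_mul, derivative_neg, derivative_X, ← C_eq_natCast]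
    ring
  have hswap : ∑ s ∈ G.indepSubsets A, ∑ _v ∈ s, (-X : ℝ[X]) ^ (s.card - 1) =
      ∑ v ∈ A, ∑ s ∈ (G.indepSubsets A).filter (v ∈ ·), (-X) ^ (s.card - 1) :=
    sum_comm' fun s v => by
      simp only [mem_filter]
      exact ⟨fun ⟨hs, hv⟩ => ⟨⟨hs, hv⟩, (mem_indepSubsets.1 hs).1 hv⟩, fun h => h.1⟩
  rw [indPolyOn_eq_sum, derivative_sum, sum_congr rfl fun s _ => hterm s, sum_neg_distrib, hswap]
  refine congrArg _ (sum_congr rfl fun v hv => ?_)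
  rw [G.sum_indepSubsets_filter_mem hv, indPolyOn_eq_sum]
  refine sum_congr rfl fun s hs => ?_
  rw [card_insert_of_notMem (notMem_of_mem_indepSubsets_sdiff hs), Nat.add_sub_cancel]

theorem eval_indPolyOn (A : Finset V) (x : ℝ) :
    (indPolyOn G A).eval x = ∑ s ∈ G.indepSubsets A, (-x) ^ s.card := by
  simp [indPolyOn_eq_sum, eval_finsetSum]

theorem one_le_eval_indPolyOn_of_nonpos (A : Finset V) {x : ℝ} (hx : x ≤ 0) :
    1 ≤ (indPolyOn G A).eval x := by
  rw [eval_indPolyOn]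
  have hempty : ∅ ∈ G.indepSubsets A := by simp [mem_indepSubsets]
  simpa using single_le_sum (fun s _ => pow_nonneg (neg_nonneg.2 hx) s.card) hempty

theorem indPoly_eq_indPolyOn_univ : indPoly G = indPolyOn G ↑(univ : Finset V) := by
  rw [indPoly, coe_univ]

theorem one_le_eval_indPoly_of_nonpos {x : ℝ} (hx : x ≤ 0) : 1 ≤ (indPoly G).eval x :=
  G.indPoly_eq_indPolyOn_univ ▸ G.one_le_eval_indPolyOn_of_nonpos univ hx

theorem mul_eval_indPolyOn_sdiff_le {y : ℝ}
    (hnonneg : ∀ A : Finset V, 0 ≤ (indPolyOn G A).eval y) {A : Finset V} {v : V} (hv : v ∉ A) :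
    y * (indPolyOn G ↑(A \ G.closedNbhd v)).eval y ≤ (indPolyOn G A).eval y := by
  have := hnonneg (insert v A)
  rw [indPolyOn_insert G hv, eval_sub, eval_mul, eval_X] at this
  linarith

theorem eval_indPolyOn_antitone {y : ℝ} (hy : 0 ≤ y)
    (hnonneg : ∀ A : Finset V, 0 ≤ (indPolyOn G A).eval y) :
    Antitone fun A : Finset V => (indPolyOn G A).eval y :=
  antitone_iff_forall_insert_le.2 fun A v hv => by
    simp only [indPolyOn_insert G hv, eval_sub, eval_mul, eval_X]
    linarith [mul_nonneg hy (hnonneg (A \ G.closedNbhd v))]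

section SmallestRoot

variable {β : ℝ}

theorem pos_of_eval_indPoly_eq_zero (hroot : (indPoly G).eval β = 0) : 0 < β := by
  by_contra! h
  linarith [G.one_le_eval_indPoly_of_nonpos h]

theorem eval_indPoly_pos_of_lt (hmin : ∀ x : ℝ, (indPoly G).eval x = 0 → β ≤ x) {t : ℝ}
    (ht : t < β) : 0 < (indPoly G).eval t := by
  by_contra! h
  rcases le_or_gt t 0 with ht0 | ht0
  · linarith [G.one_le_eval_indPoly_of_nonpos ht0]
  · have h0 := G.one_le_eval_indPoly_of_nonpos le_rfl
    obtain ⟨c, hc, hroot⟩ := intermediate_value_Icc' ht0.le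
      (indPoly G).continuous.continuousOn ⟨h, by linarith⟩
    linarith [hmin c hroot, hc.2]

/-- The set of `t` at which every `I_A` is positive is open, and closed in `[0, β)` because at a
limit point all `I_A` are nonnegative, hence dominated from below by `I_V > 0`. -/
theorem eval_indPolyOn_pos_of_lt (hmin : ∀ x : ℝ, (indPoly G).eval x = 0 → β ≤ x)
    (A : Finset V) {t : ℝ} (ht0 : 0 ≤ t) (htβ : t < β) : 0 < (indPolyOn G A).eval t := by
  let u := {y : ℝ | ∀ B : Finset V, 0 < (indPolyOn G B).eval y}
  have hu : IsOpen u := by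
    simp only [u, Set.ofPred_forall]
    exact isOpen_iInter_of_finite fun B => isOpen_lt continuous_const (Polynomial.continuous _)
  have h0 : (0 : ℝ) ∈ u := fun B =>
    zero_lt_one.trans_le (G.one_le_eval_indPolyOn_of_nonpos B le_rfl)
  have hclosure : closure u ∩ Set.Ico 0 β ⊆ u := by
    rintro y ⟨hyu, hy0, hyβ⟩ B
    have hnonneg (C : Finset V) : 0 ≤ (indPolyOn G C).eval y :=
      closure_minimal (fun x hx => (hx C).le)
        (isClosed_le continuous_const (Polynomial.continuous _)) hyu
    calc 0 < (indPolyOn G ↑(univ : Finset V)).eval y :=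
          G.indPoly_eq_indPolyOn_univ ▸ G.eval_indPoly_pos_of_lt hmin hyβ
      _ ≤ (indPolyOn G B).eval y := G.eval_indPolyOn_antitone hy0 hnonneg (subset_univ B)
  exact isPreconnected_Ico.subset_of_closure_inter_subset hu
    ⟨0, ⟨le_rfl, ht0.trans_lt htβ⟩, h0⟩ hclosure ⟨ht0, htβ⟩ A

variable (hroot : (indPoly G).eval β = 0) (hmin : ∀ x : ℝ, (indPoly G).eval x = 0 → β ≤ x)
include hroot hmin

theorem eval_indPolyOn_nonneg (A : Finset V) : 0 ≤ (indPolyOn G A).eval β := by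
  have hβ := G.pos_of_eval_indPoly_eq_zero hroot
  have hβcl : β ∈ closure (Set.Ico 0 β) := by
    rw [closure_Ico hβ.ne]
    exact ⟨hβ.le, le_rfl⟩
  show β ∈ {t | 0 ≤ (indPolyOn G A).eval t}
  exact closure_minimal (fun t ht => (G.eval_indPolyOn_pos_of_lt hmin A ht.1 ht.2).le)
    (isClosed_le continuous_const (Polynomial.continuous _)) hβcl

theorem le_one_of_eval_indPoly_eq_zero [Nonempty V] : β ≤ 1 := by
  obtain ⟨v⟩ := ‹Nonempty V›
  have := G.eval_indPolyOn_nonneg hroot hmin {v}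
  rw [← insert_empty, indPolyOn_insert G (notMem_empty v), empty_sdiff, indPolyOn_empty] at this
  simpa using this

theorem mul_eval_indPolyOn_erase_le {A : Finset V} {w y : V} (hw : w ∉ A) (hadj : G.Adj w y) :
    β * (indPolyOn G ↑(A.erase y)).eval β ≤ (indPolyOn G A).eval β := by
  have hβ := (G.pos_of_eval_indPoly_eq_zero hroot).le
  have hsub : A \ G.closedNbhd w ⊆ A.erase y := fun u hu =>
    mem_erase.2 ⟨fun h => (mem_sdiff.1 hu).2 (mem_closedNbhd.2 (Or.inr (h ▸ hadj))),
      (mem_sdiff.1 hu).1⟩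
  calc β * (indPolyOn G ↑(A.erase y)).eval β
      ≤ β * (indPolyOn G ↑(A \ G.closedNbhd w)).eval β :=
        mul_le_mul_of_nonneg_left
          (G.eval_indPolyOn_antitone hβ (G.eval_indPolyOn_nonneg hroot hmin) hsub) hβ
    _ ≤ (indPolyOn G A).eval β :=
        G.mul_eval_indPolyOn_sdiff_le (G.eval_indPolyOn_nonneg hroot hmin) hw

theorem pow_mul_eval_indPolyOn_sdiff_le {t v : V} (p : G.Walk t v) {A : Finset V} (ht : t ∉ A) :
    β ^ (p.length + 1) * (indPolyOn G ↑(A \ G.closedNbhd v)).eval β ≤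
      (indPolyOn G A).eval β := by
  have hβ := (G.pos_of_eval_indPoly_eq_zero hroot).le
  have hnonneg := G.eval_indPolyOn_nonneg hroot hmin
  induction p generalizing A with
  | nil => simpa using G.mul_eval_indPolyOn_sdiff_le hnonneg ht
  | @cons t x v hadj q ih =>
    have hsub : A.erase x \ G.closedNbhd v ⊆ A \ G.closedNbhd v :=
      sdiff_subset_sdiff (erase_subset x A) le_rfl
    calc β ^ ((q.cons hadj).length + 1) * (indPolyOn G ↑(A \ G.closedNbhd v)).eval β
        = β * (β ^ (q.length + 1) * (indPolyOn G ↑(A \ G.closedNbhd v)).eval β) := by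
          rw [Walk.length_cons]
          ring
      _ ≤ β * (β ^ (q.length + 1) * (indPolyOn G ↑(A.erase x \ G.closedNbhd v)).eval β) :=
          mul_le_mul_of_nonneg_left (mul_le_mul_of_nonneg_left
            (G.eval_indPolyOn_antitone hβ hnonneg hsub) (pow_nonneg hβ _)) hβ
      _ ≤ β * (indPolyOn G ↑(A.erase x)).eval β :=
          mul_le_mul_of_nonneg_left (ih (notMem_erase x A)) hβ
      _ ≤ (indPolyOn G A).eval β := G.mul_eval_indPolyOn_erase_le hroot hmin ht hadj

theorem pow_diam_mul_eval_indPolyOn_sdiff_le (hG : G.Connected) {A : Finset V} {u v : V}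
    (hu : Disjoint (G.closedNbhd u) A) (hv : v ∈ A) :
    β ^ G.diam * (indPolyOn G ↑(A \ G.closedNbhd v)).eval β ≤ (indPolyOn G A).eval β := by
  have : Nonempty V := hG.nonempty
  have hβ := (G.pos_of_eval_indPoly_eq_zero hroot).le
  obtain ⟨p, hp⟩ := hG.exists_walk_length_eq_dist u v
  cases p with
  | nil => exact absurd hv (Finset.disjoint_left.1 hu (mem_closedNbhd.2 (Or.inl rfl)))
  | @cons _ x _ hadj q =>
    have hx : x ∉ A := Finset.disjoint_left.1 hu (mem_closedNbhd.2 (Or.inr hadj))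
    have hlength : q.length + 1 ≤ G.diam := by
      rw [← Walk.length_cons hadj q, hp]
      exact dist_le_diam (connected_iff_ediam_ne_top.1 hG)
    calc β ^ G.diam * (indPolyOn G ↑(A \ G.closedNbhd v)).eval β
        ≤ β ^ (q.length + 1) * (indPolyOn G ↑(A \ G.closedNbhd v)).eval β :=
          mul_le_mul_of_nonneg_right
            (pow_le_pow_of_le_one hβ (G.le_one_of_eval_indPoly_eq_zero hroot hmin) hlength)
            (G.eval_indPolyOn_nonneg hroot hmin _)
      _ ≤ (indPolyOn G A).eval β := G.pow_mul_eval_indPolyOn_sdiff_le hroot hmin q hx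

theorem abs_eval_iterate_derivative_indPolyOn_le (hG : G.Connected) {u : V} (j : ℕ)
    {A : Finset V} (hA : Disjoint (G.closedNbhd u) A) :
    |(derivative^[j] (indPolyOn G A)).eval β| ≤
      (indPolyOn G A).eval β * (Fintype.card V / β ^ G.diam) ^ j := by
  have hβ := G.pos_of_eval_indPoly_eq_zero hroot
  induction j generalizing A with
  | zero => simp [abs_of_nonneg (G.eval_indPolyOn_nonneg hroot hmin A)]
  | succ j ih =>
    have hterm (v : V) (hv : v ∈ A) :
        |(derivative^[j] (indPolyOn G ↑(A \ G.closedNbhd v))).eval β| ≤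
          (indPolyOn G A).eval β / β ^ G.diam * (Fintype.card V / β ^ G.diam) ^ j := by
      refine (ih (hA.mono_right sdiff_subset)).trans
        (mul_le_mul_of_nonneg_right ?_ (by positivity))
      rw [le_div_iff₀ (pow_pos hβ _), mul_comm]
      exact G.pow_diam_mul_eval_indPolyOn_sdiff_le hroot hmin hG hA hv
    calc |(derivative^[j + 1] (indPolyOn G A)).eval β|
        = |∑ v ∈ A, (derivative^[j] (indPolyOn G ↑(A \ G.closedNbhd v))).eval β| := by
          rw [Function.iterate_succ_apply, derivative_indPolyOn, iterate_derivative_neg,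
            iterate_derivative_sum, eval_neg, abs_neg, eval_finsetSum]
      _ ≤ ∑ v ∈ A, |(derivative^[j] (indPolyOn G ↑(A \ G.closedNbhd v))).eval β| :=
          abs_sum_le_sum_abs _ _
      _ ≤ ∑ _v ∈ A, (indPolyOn G A).eval β / β ^ G.diam * (Fintype.card V / β ^ G.diam) ^ j :=
          sum_le_sum hterm
      _ ≤ Fintype.card V *
            ((indPolyOn G A).eval β / β ^ G.diam * (Fintype.card V / β ^ G.diam) ^ j) := by
          rw [sum_const, nsmul_eq_mul]
          gcongr
          · exact mul_nonneg (div_nonneg (G.eval_indPolyOn_nonneg hroot hmin A) (by positivity))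
              (by positivity)
          · exact card_le_univ A
      _ = (indPolyOn G A).eval β * (Fintype.card V / β ^ G.diam) ^ (j + 1) := by ring

end SmallestRoot

end SimpleGraph

/-- For a connected graph `G` on `n` vertices, `β := β(G)` and
`r_G := β^{dia(G)}/(2n)`: for every complex `z` with `|z − β| < r_G` one has
`|I'(G,z)| ≤ 2·|I'(G,β)|`. -/
theorem deriv_indPoly_bounded_near_beta {V : Type*} [Fintype V]
    (G : SimpleGraph V) (hG : G.Connected)
    (β : ℝ) (hroot : (indPoly G).eval β = 0)
    (hmin : ∀ x : ℝ, (indPoly G).eval x = 0 → β ≤ x)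
    (rG : ℝ) (hrG : rG = β ^ G.diam / (2 * Fintype.card V)) :
    ∀ z : ℂ, ‖z - (β : ℂ)‖ < rG →
      ‖aeval z (derivative (indPoly G))‖ ≤
        2 * |(derivative (indPoly G)).eval β| := by
  classical
  intro z hz
  have : Nonempty V := hG.nonempty
  have hβ := G.pos_of_eval_indPoly_eq_zero hroot
  have hdisc : Fintype.card V / β ^ G.diam * ‖z - β‖ ≤ 1 / 2 := by
    rw [hrG, lt_div_iff₀ (by positivity)] at hz
    rw [div_mul_eq_mul_div, div_le_iff₀ (by positivity)]
    linarith
  have hlocal (v : V) : ‖aeval z (indPolyOn G ↑(Finset.univ \ G.closedNbhd v))‖ ≤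
      2 * (indPolyOn G ↑(Finset.univ \ G.closedNbhd v)).eval β :=
    Polynomial.norm_aeval_le_of_abs_iterate_derivative_le (by positivity)
      (fun j => G.abs_eval_iterate_derivative_indPolyOn_le hroot hmin hG j
        Finset.disjoint_sdiff) hdisc
  rw [G.indPoly_eq_indPolyOn_univ, G.derivative_indPolyOn, map_neg, norm_neg, eval_neg, abs_neg,
    map_sum, eval_finsetSum, abs_of_nonneg (Finset.sum_nonneg fun v _ =>
      G.eval_indPolyOn_nonneg hroot hmin _), Finset.mul_sum]
  exact (norm_sum_le _ _).trans (Finset.sum_le_sum fun v _ => hlocal v)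
end

section
/- Define the ordered Bell numbers (Fubini numbers) by a_0 := 1 and a_N := Σ_{i=0}^{N−1} C(N,i)·a_i for N ≥ 1, where C(N,i) is the binomial coefficient. Then for every N ≥ 0 one has a_N / N! ≤ (1/ln 2)^N, i.e., a_N ≤ N!·(ln 2)^{−N}. -/
/-- Let `a` be the sequence of ordered Bell (Fubini) numbers, i.e.
`a 0 = 1` and `a N = ∑_{i=0}^{N−1} C(N,i)·a i` for `N ≥ 1`.  Then for every `N`,
`a N / N! ≤ (1/ln 2)^N`. -/
theorem ordered_bell_upper_bound (a : ℕ → ℕ) (h0 : a 0 = 1)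
    (hrec : ∀ N : ℕ, 1 ≤ N → a N = ∑ i ∈ Finset.range N, N.choose i * a i) :
    ∀ N : ℕ, (a N : ℝ) / (N.factorial : ℝ) ≤ (1 / Real.log 2) ^ N := by
  have hl2 : (0:ℝ) < Real.log 2 := Real.log_pos (by norm_num)
  set c : ℝ := 1 / Real.log 2 with hc
  have hc0 : 0 < c := by positivity
  have hcl : c * Real.log 2 = 1 := by rw [hc]; field_simp
  intro N
  induction N using Nat.strong_induction_on with
  | _ N ih =>
    rcases Nat.eq_zero_or_pos N with rfl | hN
    · rw [h0]; norm_num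
    · rw [hrec N hN]
      push_cast
      rw [Finset.sum_div]
      have step1 : ∀ i ∈ Finset.range N,
          (N.choose i : ℝ) * (a i) / (N.factorial : ℝ)
            ≤ c ^ i / ((N - i).factorial : ℝ) := by
        intro i hi
        rw [Finset.mem_range] at hi
        have hle : i ≤ N := le_of_lt hi
        have hfact : (N.choose i : ℝ) * (i.factorial : ℝ) * ((N - i).factorial : ℝ)
            = (N.factorial : ℝ) := by
          exact_mod_cast congrArg (Nat.cast (R := ℝ))
            (Nat.choose_mul_factorial_mul_factorial hle)
        have h1 : (N.choose i : ℝ) * (a i) / (N.factorial : ℝ)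
            = ((a i : ℝ) / (i.factorial : ℝ)) * (1 / ((N - i).factorial : ℝ)) := by
          rw [← hfact]
          have h2 : (i.factorial : ℝ) ≠ 0 := by positivity
          have h3 : ((N - i).factorial : ℝ) ≠ 0 := by positivity
          have h4 : (N.choose i : ℝ) ≠ 0 :=
            Nat.cast_ne_zero.mpr (Nat.choose_pos hle).ne'
          field_simp
        rw [h1]
        have hih := ih i hi
        have : (a i : ℝ) / (i.factorial : ℝ) ≤ c ^ i := hih
        calc ((a i : ℝ) / (i.factorial : ℝ)) * (1 / ((N - i).factorial : ℝ))
            ≤ c ^ i * (1 / ((N - i).factorial : ℝ)) := by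
              apply mul_le_mul_of_nonneg_right this (by positivity)
          _ = c ^ i / ((N - i).factorial : ℝ) := by ring
      calc ∑ i ∈ Finset.range N, (N.choose i : ℝ) * (a i) / (N.factorial : ℝ)
          ≤ ∑ i ∈ Finset.range N, c ^ i / ((N - i).factorial : ℝ) :=
            Finset.sum_le_sum step1
        _ = ∑ j ∈ Finset.range N, c ^ (N - 1 - j) / ((N - (N - 1 - j)).factorial : ℝ) :=
            (Finset.sum_range_reflect _ N).symm
        _ = ∑ j ∈ Finset.range N, c ^ N * (Real.log 2 ^ (j+1) / ((j+1).factorial : ℝ)) := by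
            apply Finset.sum_congr rfl
            intro j hj
            rw [Finset.mem_range] at hj
            have h1 : N - (N - 1 - j) = j + 1 := by omega
            have h2 : N - 1 - j = N - (j+1) := by omega
            have h3 : c ^ (j+1) = (Real.log 2 ^ (j+1))⁻¹ := by
              rw [hc, one_div, ← inv_pow]
            rw [h1, h2, pow_sub₀ c (ne_of_gt hc0) (by omega), h3, inv_inv, mul_div_assoc]
        _ = c ^ N * ∑ j ∈ Finset.range N, Real.log 2 ^ (j+1) / ((j+1).factorial : ℝ) := by
            rw [Finset.mul_sum]
        _ ≤ c ^ N * 1 := by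
            apply mul_le_mul_of_nonneg_left _ (by positivity)
            have hsum := Real.sum_le_exp_of_nonneg (le_of_lt hl2) (N + 1)
            rw [Finset.sum_range_succ'] at hsum
            simp only [pow_zero, Nat.factorial_zero] at hsum
            rw [Real.exp_log (by norm_num)] at hsum
            push_cast at hsum ⊢
            linarith
        _ = c ^ N := mul_one _
end
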